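/- Let F be a vector-valued RKHS of functions X → Y with kernel K, and consider J(f) = Σ_{j=1}^n ‖y_j − f(x_j)‖²_Y + λ‖f‖²_F with λ > 0. Any minimizer f̂ of J over F lies in the closed subspace S = span{K(x_j,·)u : 1 ≤ j ≤ n, u ∈ Y}; i.e., writing f = f_S + f_⊥ with f_⊥ ⊥ S, we have J(f_S) ≤ J(f) with strict inequality if f_⊥ ≠ 0. -/
import Mathlib


open RealInnerProductSpace

theorem representer_theorem_vector_valued
    {X F Y : Type*} [NormedAddCommGroup F] [InnerProductSpace ℝ F]
    [NormedAddCommGroup Y] [InnerProductSpace ℝ Y]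
    (ev : F → X → Y) (k : X → Y → F)
    (hrep : ∀ (f : F) (w : X) (g : Y), ⟪f, k w g⟫ = ⟪ev f w, g⟫)
    {n : ℕ} (y : Fin n → Y) (x : Fin n → X)
    (lam : ℝ) (hlam : 0 < lam) :
    ∀ f fS fperp : F,
      fS ∈ (Submodule.span ℝ {h : F | ∃ j u, h = k (x j) u}).topologicalClosure →
      fperp ∈ ((Submodule.span ℝ {h : F | ∃ j u, h = k (x j) u}).topologicalClosure)ᗮ →
      f = fS + fperp →
      ((∑ j, ‖y j - ev fS (x j)‖ ^ 2) + lam * ‖fS‖ ^ 2 ≤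
        (∑ j, ‖y j - ev f (x j)‖ ^ 2) + lam * ‖f‖ ^ 2) ∧
      (fperp ≠ 0 →
        (∑ j, ‖y j - ev fS (x j)‖ ^ 2) + lam * ‖fS‖ ^ 2 <
          (∑ j, ‖y j - ev f (x j)‖ ^ 2) + lam * ‖f‖ ^ 2) := by
  intro f fS fperp hS hperp hf
  -- membership of k (x j) u in the closed span
  have hk : ∀ j u, k (x j) u ∈
      (Submodule.span ℝ {h : F | ∃ j u, h = k (x j) u}).topologicalClosure := by
    intro j u
    exact Submodule.le_topologicalClosure _ (Submodule.subset_span ⟨j, u, rfl⟩)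
  -- ev f (x j) = ev fS (x j)
  have hev : ∀ j, ev f (x j) = ev fS (x j) := by
    intro j
    have h0 : ∀ g : Y, ⟪ev f (x j) - ev fS (x j), g⟫ = 0 := by
      intro g
      have h1 := hrep f (x j) g
      have h2 := hrep fS (x j) g
      have h3 : ⟪fperp, k (x j) g⟫ = 0 := by
        rw [real_inner_comm]; exact hperp _ (hk j g)
      rw [hf] at h1 ⊢
      rw [inner_add_left, h2, h3] at h1
      rw [inner_sub_left, ← h1]
      ring
    have := h0 (ev f (x j) - ev fS (x j))
    rw [inner_self_eq_zero, sub_eq_zero] at this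
    exact this
  -- orthogonality gives norm identity
  have horth : ⟪fS, fperp⟫ = 0 := by
    exact hperp fS hS
  have hnorm : ‖f‖ ^ 2 = ‖fS‖ ^ 2 + ‖fperp‖ ^ 2 := by
    rw [hf]
    have := norm_add_sq_real fS fperp
    rw [horth] at this
    linarith
  have hsum : (∑ j, ‖y j - ev f (x j)‖ ^ 2) = ∑ j, ‖y j - ev fS (x j)‖ ^ 2 := by
    apply Finset.sum_congr rfl
    intro j _
    rw [hev j]
  constructor
  · rw [hsum, hnorm]
    nlinarith [sq_nonneg ‖fperp‖]
  · intro hne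
    rw [hsum, hnorm]
    have : 0 < ‖fperp‖ := norm_pos_iff.mpr hne
    nlinarith [mul_pos hlam (pow_pos this 2)]
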